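/- Let g = L_{5,7} (nonzero brackets [e1,e2]=e3, [e1,e3]=e4, [e1,e4]=e5) and let g_R = g ⊕ ℝ with bracket [(ξ,r),(η,k)] = ([ξ,η],0), with 1* ∈ g_R* the projection onto the ℝ-summand and e^1,…,e^5 the dual basis of g* (extended by zero on the ℝ-summand). Then the 2-form ω := −(e^1 ∧ e^3 + e^4 ∧ e^5) + (1* − e^5) ∧ e^4 ∈ Λ^2 g_R* satisfies Dω = 0, where D = δ + 1*∧ and δ is the Chevalley–Eilenberg differential of g_R. -/

import Mathlib

set_option linter.unnecessarySeqFocus false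

noncomputable section

/-- The wedge product of two scalar-valued alternating forms. -/
def wedge {R M : Type*} [CommRing R] [AddCommGroup M] [Module R M] {m n : ℕ}
    (α : M [⋀^Fin m]→ₗ[R] R) (β : M [⋀^Fin n]→ₗ[R] R) : M [⋀^Fin (m + n)]→ₗ[R] R :=
  (LinearMap.mul' R R).compAlternatingMap ((α.domCoprod β).domDomCongr finSumFinEquiv)

/-- Reindexing of an alternating form along an equality of degrees. -/
def castForm {R M : Type*} [CommRing R] [AddCommGroup M] [Module R M] {m n : ℕ}
    (h : m = n) (α : M [⋀^Fin m]→ₗ[R] R) : M [⋀^Fin n]→ₗ[R] R :=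
  α.domDomCongr (finCongr h)

/-- A linear functional, viewed as a `1`-form. -/
def oneForm {R M : Type*} [CommRing R] [AddCommGroup M] [Module R M]
    (f : M →ₗ[R] R) : M [⋀^Fin 1]→ₗ[R] R :=
  AlternatingMap.ofSubsingleton R M R 0 f


/-- The argument tuple `([x_i,x_j], x_0, …, x̂_i, …, x̂_j, …, x_m)` appearing in the Koszul
formula for the Chevalley–Eilenberg differential (only relevant when `i < j`). -/
def kosArg {W : Type*} [LieRing W] {m : ℕ} (v : Fin (m + 1) → W) (i j : Fin (m + 1)) :
    Fin m → W := fun k =>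
  if hk : (k : ℕ) = 0 then ⁅v i, v j⁆
  else
    v ⟨if (k : ℕ) - 1 < (i : ℕ) then (k : ℕ) - 1
       else if (k : ℕ) < (j : ℕ) then (k : ℕ) else (k : ℕ) + 1,
      by have := k.isLt; have := i.isLt; have := j.isLt; split_ifs <;> omega⟩

/-- `d` is (the degree `m` part of) the Chevalley–Eilenberg differential of `W` with trivial
coefficients, characterized by the Koszul formula
`(δα)(x_0,…,x_m) = Σ_{i<j} (−1)^{i+j} α([x_i,x_j],x_0,…,x̂_i,…,x̂_j,…,x_m)`. -/
def IsCEDiff {R W : Type*} [CommRing R] [LieRing W] [LieAlgebra R W]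
    {m : ℕ} (d : (W [⋀^Fin m]→ₗ[R] R) → (W [⋀^Fin (m + 1)]→ₗ[R] R)) : Prop :=
  ∀ (α : W [⋀^Fin m]→ₗ[R] R) (v : Fin (m + 1) → W),
    d α v = ∑ p ∈ Finset.univ.filter (fun p : Fin (m + 1) × Fin (m + 1) => p.1 < p.2),
      ((-1 : R) ^ ((p.1 : ℕ) + (p.2 : ℕ))) • α (kosArg v p.1 p.2)


section TrivialExtension

variable {R : Type*} [CommRing R] {L : Type*} [LieRing L]

/-- The Lie bracket `[(ξ,r),(η,k)] = ([ξ,η],0)` on the abelian extension `L ⊕ R`. -/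
instance instLieRingTrivExt : LieRing (L × R) where
  bracket x y := (⁅x.1, y.1⁆, 0)
  add_lie x y z := by ext <;> simp [add_lie]
  lie_add x y z := by ext <;> simp [lie_add]
  lie_self x := by ext <;> simp
  leibniz_lie x y z := by ext <;> simp

instance instLieAlgebraTrivExt [LieAlgebra R L] : LieAlgebra R (L × R) where
  lie_smul t x y := by
    show ((⁅x.1, (t • y).1⁆ : L), (0 : R)) = t • (⁅x.1, y.1⁆, (0 : R))
    ext <;> simp

end TrivialExtension


/-- The underlying vector space of the 5-dimensional nilpotent Lie algebra `L57`. -/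
def L57 : Type := Fin 5 → ℝ

instance : AddCommGroup L57 := inferInstanceAs (AddCommGroup (Fin 5 → ℝ))
instance : Module ℝ L57 := inferInstanceAs (Module ℝ (Fin 5 → ℝ))

theorem L57.add_apply (x y : L57) (i : Fin 5) : (x + y) i = x i + y i := rfl
theorem L57.smul_apply (t : ℝ) (x : L57) (i : Fin 5) : (t • x) i = t * x i := rfl

/-- The bracket of `L57`: `[e1,e2] = e3`, `[e1,e3] = e4`, `[e1,e4] = e5`. -/
def L57.b (x y : Fin 5 → ℝ) : Fin 5 → ℝ := ![0, 0, x 0 * y 1 - x 1 * y 0, x 0 * y 2 - x 2 * y 0, x 0 * y 3 - x 3 * y 0]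

instance : LieRing L57 where
  bracket x y := L57.b x y
  add_lie x y z := by
    show L57.b (x + y) z = L57.b x z + L57.b y z
    funext i; fin_cases i <;> simp [L57.b, L57.add_apply] <;> ring
  lie_add x y z := by
    show L57.b x (y + z) = L57.b x y + L57.b x z
    funext i; fin_cases i <;> simp [L57.b, L57.add_apply] <;> ring
  lie_self x := by
    show L57.b x x = 0
    funext i; fin_cases i <;> simp [L57.b] <;> ring
  leibniz_lie x y z := by
    show L57.b x (L57.b y z) = L57.b (L57.b x y) z + L57.b y (L57.b x z)
    funext i; fin_cases i <;> simp [L57.b, L57.add_apply] <;> ring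

instance : LieAlgebra ℝ L57 where
  lie_smul t x y := by
    show L57.b x (t • y) = t • L57.b x y
    funext i; fin_cases i <;> simp [L57.b, L57.smul_apply] <;> ring

/-- The standard basis `e1, …, e5` of `L57` (indexed by `0, …, 4`). -/
def L57.e (i : Fin 5) : L57 := (Pi.single i 1 : Fin 5 → ℝ)

/-- The dual basis `e^1, …, e^5` of `L57` (indexed by `0, …, 4`). -/
def L57.eps (i : Fin 5) : Module.Dual ℝ L57 where
  toFun x := x i
  map_add' _ _ := rfl
  map_smul' _ _ := rfl


/-- `1* ∈ g_ℝ*`, the projection onto the `ℝ`-summand of `g_ℝ = L57 ⊕ ℝ`. -/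
def oneStar : Module.Dual ℝ (L57 × ℝ) := LinearMap.snd ℝ L57 ℝ

/-- `e^1, …, e^5`, extended by zero on the `ℝ`-summand of `g_ℝ = L57 ⊕ ℝ`. -/
def epsR (i : Fin 5) : Module.Dual ℝ (L57 × ℝ) :=
  (L57.eps i).comp (LinearMap.fst ℝ L57 ℝ)

/-- The 2-form `ω = −(e^1 ∧ e^3 + e^4 ∧ e^5) + (1* − e^5) ∧ e^4` on `g_ℝ = L57 ⊕ ℝ`. -/
def ω : (L57 × ℝ) [⋀^Fin 2]→ₗ[ℝ] ℝ := -(wedge (oneForm (epsR 0)) (oneForm (epsR 2)) + wedge (oneForm (epsR 3)) (oneForm (epsR 4))) + wedge (oneForm (oneStar - epsR 4)) (oneForm (epsR 3))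

/-!
Both summands of `Dω` are evaluated on an arbitrary triple by explicit formulas: the Koszul
formula in degree two for `δω`, and the expansion of `1* ∧ ω` along the slot of the 1-form.
After that, `Dω = 0` is a polynomial identity in the coordinates of the three arguments.
-/

namespace Equiv.Perm

theorem mem_sumCongrHom_range_fin_one_iff {ι : Type*} [Finite ι] (σ : Perm (Fin 1 ⊕ ι)) :
    σ ∈ (sumCongrHom (Fin 1) ι).range ↔ σ (Sum.inl 0) = Sum.inl 0 := by
  constructor
  · rintro ⟨⟨σ₁, σ₂⟩, rfl⟩
    simp [Subsingleton.elim (σ₁ 0) 0]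
  · intro h
    refine mem_sumCongrHom_range_of_perm_mapsTo_inl ?_
    rintro _ ⟨i, rfl⟩
    exact ⟨0, by rw [Subsingleton.elim i 0, h]⟩

-- A coset is determined by the image of `Sum.inl 0`, so the transpositions `swap (inl 0) k`
-- form a system of representatives.
theorem ModSumCongr.sum_fin_one {ι N : Type*} [Fintype ι] [DecidableEq ι] [AddCommMonoid N]
    (F : ModSumCongr (Fin 1) ι → N) :
    ∑ q, F q = ∑ k : Fin 1 ⊕ ι, F (Quotient.mk'' (swap (Sum.inl 0) k)) := by
  refine (Fintype.sum_bijective _ ⟨fun k k' hkk' => ?_, fun q => ?_⟩ _ F fun _ => rfl).symm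
  · have := (mem_sumCongrHom_range_fin_one_iff _).mp
      (QuotientGroup.leftRel_apply.mp (Quotient.exact' hkk'))
    rw [swap_inv, mul_apply, swap_apply_left, swap_apply_eq_iff, swap_apply_left] at this
    exact this.symm
  · induction q using Quotient.inductionOn' with
    | h σ =>
      refine ⟨σ (Sum.inl 0), Quotient.sound' (QuotientGroup.leftRel_apply.mpr ?_)⟩
      rw [mem_sumCongrHom_range_fin_one_iff]
      simp

end Equiv.Perm

section Wedge

variable {R M : Type*} [CommRing R] [AddCommGroup M] [Module R M]

open Equiv

theorem oneForm_apply (f : M →ₗ[R] R) (v : Fin 1 → M) : oneForm f v = f (v 0) := rfl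

theorem wedge_oneForm_apply {n : ℕ} (f : M →ₗ[R] R) (β : M [⋀^Fin n]→ₗ[R] R)
    (v : Fin (1 + n) → M) :
    wedge (oneForm f) β v = ∑ k : Fin 1 ⊕ Fin n, Perm.sign (swap (Sum.inl 0) k) •
      (f (v (finSumFinEquiv k)) *
        β fun i => v (finSumFinEquiv (swap (Sum.inl 0) k (Sum.inr i)))) := by
  change LinearMap.mul' R R ((oneForm f).domCoprod β (v ∘ finSumFinEquiv)) = _
  rw [AlternatingMap.domCoprod_apply, _root_.sum_apply, Perm.ModSumCongr.sum_fin_one,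
    map_sum]
  refine Finset.sum_congr rfl fun k _ => ?_
  rw [AlternatingMap.domCoprod.summand_mk'', _root_.smul_apply]
  simp only [MultilinearMap.domDomCongr_apply, MultilinearMap.domCoprod_apply,
    AlternatingMap.coe_multilinearMap, Units.smul_def, map_zsmul, LinearMap.mul'_apply,
    oneForm_apply, swap_apply_left, Function.comp_apply]

theorem wedge_oneForm_oneForm_apply (f g : M →ₗ[R] R) (v : Fin 2 → M) :
    wedge (oneForm f) (oneForm g) v = f (v 0) * g (v 1) - f (v 1) * g (v 0) := by
  rw [wedge_oneForm_apply, Fintype.sum_sum_type]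
  simp only [Fin.sum_univ_one, swap_self, Perm.sign_refl,
    Perm.sign_swap Sum.inl_ne_inr, one_smul, Units.neg_smul]
  rw [sub_eq_add_neg]
  rfl

theorem wedge_oneForm_apply_fin_three (f : M →ₗ[R] R) (β : M [⋀^Fin 2]→ₗ[R] R)
    (v : Fin 3 → M) :
    wedge (oneForm f) β v =
      f (v 0) * β ![v 1, v 2] - f (v 1) * β ![v 0, v 2] - f (v 2) * β ![v 1, v 0] := by
  rw [wedge_oneForm_apply, Fintype.sum_sum_type, Fin.sum_univ_two]
  simp only [Fin.sum_univ_one, swap_self, Perm.sign_refl,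
    Perm.sign_swap Sum.inl_ne_inr, one_smul, Units.neg_smul]
  have h₀ : (fun i : Fin 2 => v (finSumFinEquiv (Equiv.refl _ (Sum.inr i)))) = ![v 1, v 2] := by
    ext i; fin_cases i <;> rfl
  have h₁ : (fun i : Fin 2 => v (finSumFinEquiv (swap (Sum.inl 0) (Sum.inr 0) (Sum.inr i)))) =
      ![v 0, v 2] := by
    ext i; fin_cases i <;> rfl
  have h₂ : (fun i : Fin 2 => v (finSumFinEquiv (swap (Sum.inl 0) (Sum.inr 1) (Sum.inr i)))) =
      ![v 1, v 0] := by
    ext i; fin_cases i <;> rfl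
  rw [h₀, h₁, h₂]
  change f (v 0) * _ + (-(f (v 1) * _) + -(f (v 2) * _)) = _
  ring

end Wedge

theorem IsCEDiff.apply_fin_three {R W : Type*} [CommRing R] [LieRing W] [LieAlgebra R W]
    {d : (W [⋀^Fin 2]→ₗ[R] R) → (W [⋀^Fin 3]→ₗ[R] R)} (hd : IsCEDiff d)
    (α : W [⋀^Fin 2]→ₗ[R] R) (v : Fin 3 → W) :
    d α v = -α ![⁅v 0, v 1⁆, v 2] + α ![⁅v 0, v 2⁆, v 1] - α ![⁅v 1, v 2⁆, v 0] := by
  have hpairs : Finset.univ.filter (fun p : Fin 3 × Fin 3 => p.1 < p.2) =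
      {(0, 1), (0, 2), (1, 2)} := by
    decide
  have k₀₁ : kosArg v 0 1 = ![⁅v 0, v 1⁆, v 2] := by ext k; fin_cases k <;> rfl
  have k₀₂ : kosArg v 0 2 = ![⁅v 0, v 2⁆, v 1] := by ext k; fin_cases k <;> rfl
  have k₁₂ : kosArg v 1 2 = ![⁅v 1, v 2⁆, v 0] := by ext k; fin_cases k <;> rfl
  rw [hd, hpairs, Finset.sum_insert (by decide), Finset.sum_insert (by decide),
    Finset.sum_singleton, k₀₁, k₀₂, k₁₂]
  norm_num
  ring

theorem trivExt_lie_def {R L : Type*} [CommRing R] [LieRing L] (x y : L × R) :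
    ⁅x, y⁆ = (⁅x.1, y.1⁆, 0) :=
  rfl

theorem L57.lie_def (x y : L57) : ⁅x, y⁆ = L57.b x y := rfl

theorem epsR_apply (i : Fin 5) (x : L57 × ℝ) : epsR i x = x.1 i := rfl

theorem oneStar_apply (x : L57 × ℝ) : oneStar x = x.2 := rfl

theorem ω_apply (x y : L57 × ℝ) :
    ω ![x, y] = -(x.1 0 * y.1 2 - y.1 0 * x.1 2 + (x.1 3 * y.1 4 - y.1 3 * x.1 4)) +
      ((x.2 - x.1 4) * y.1 3 - (y.2 - y.1 4) * x.1 3) := by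
  simp only [ω, AlternatingMap.add_apply, AlternatingMap.neg_apply, wedge_oneForm_oneForm_apply,
    Matrix.cons_val_zero, Matrix.cons_val_one, LinearMap.sub_apply, epsR_apply, oneStar_apply]

/-- Let `g = L_{5,7}` (nonzero brackets `[e1,e2]=e3`, `[e1,e3]=e4`,
`[e1,e4]=e5`) and let `g_ℝ = g ⊕ ℝ` with bracket `[(ξ,r),(η,k)] = ([ξ,η],0)`, with
`1* ∈ g_ℝ*` the projection onto the `ℝ`-summand and `e^1,…,e^5` the dual basis of `g*`
(extended by zero on the `ℝ`-summand). Then the 2-form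
`ω := −(e^1 ∧ e^3 + e^4 ∧ e^5) + (1* − e^5) ∧ e^4 ∈ Λ² g_ℝ*` satisfies `Dω = 0`, where
`D = δ + 1*∧` and `δ` is the Chevalley–Eilenberg differential of `g_ℝ`
(given by the Koszul formula, i.e. any `δ` with `IsCEDiff δ`). -/
theorem Domega_eq_zero_L57
    (δ : ((L57 × ℝ) [⋀^Fin 2]→ₗ[ℝ] ℝ) → ((L57 × ℝ) [⋀^Fin 3]→ₗ[ℝ] ℝ))
    (hδ : IsCEDiff δ) :
    δ ω + wedge (oneForm oneStar) ω = 0 := by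
  ext v
  rw [AlternatingMap.add_apply, AlternatingMap.zero_apply, hδ.apply_fin_three,
    wedge_oneForm_apply_fin_three]
  simp only [ω_apply, oneStar_apply, trivExt_lie_def, L57.lie_def, L57.b, Matrix.cons_val_zero,
    Matrix.cons_val_two, Matrix.cons_val_three, Matrix.cons_val_four,
    Matrix.head_cons, Matrix.tail_cons]
  ring

end
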